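/- arXiv:2301.07373 — 15 statements merged into one kernel-verified Lean document; each statement's English description precedes it below -/
import Mathlib

section
/- Let R be a commutative ring with identity and let S be a multiplicatively closed subset of R. Then R is an S-Bézout ring if and only if every ideal of R generated by two elements is S-principal. -/
/-- An ideal `I` of a commutative ring `R` is `S`-principal if there exist `s ∈ S`
and `a ∈ R` such that `sI ⊆ aR ⊆ I`. -/
def Ideal.IsSPrincipal {R : Type*} [CommRing R] (S : Set R) (I : Ideal R) : Prop :=
  ∃ s ∈ S, ∃ a : R, (∀ x ∈ I, s * x ∈ Ideal.span {a}) ∧ Ideal.span {a} ≤ I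

/-- A commutative ring `R` is `S`-Bézout if every finitely generated ideal of `R`
is `S`-principal. -/
def IsSBezout (R : Type*) [CommRing R] (S : Set R) : Prop :=
  ∀ I : Ideal R, I.FG → I.IsSPrincipal S
/-- A commutative ring `R` is `S`-Bézout if and only if every ideal generated by
two elements is `S`-principal. -/
theorem sBezout_iff_two_generated {R : Type*} [CommRing R] (S : Submonoid R) :
    IsSBezout R S ↔ ∀ a b : R, (Ideal.span {a, b}).IsSPrincipal S := by
  classical
  constructor
  · intro h a b
    exact h _ ⟨{a, b}, by simp⟩
  · intro h I hI
    obtain ⟨T, rfl⟩ := hI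
    induction T using Finset.induction with
    | empty =>
      refine ⟨1, S.one_mem, 0, ?_, ?_⟩
      · intro x hx
        simp only [Finset.coe_empty, Ideal.span_empty, Ideal.mem_bot] at hx
        simp [hx]
      · simp [Ideal.span_le]
    | @insert a T ha ih =>
      obtain ⟨t, htS, b, htb, hbT⟩ := ih
      obtain ⟨u, huS, c, huc, hc⟩ := h a b
      refine ⟨u * t, S.mul_mem huS htS, c, ?_, ?_⟩
      · intro x hx
        rw [Finset.coe_insert, Ideal.span_insert] at hx
        obtain ⟨y, hy, z, hz, rfl⟩ := Submodule.mem_sup.mp hx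
        have hty : t * y ∈ Ideal.span {a, b} := by
          have : t * y ∈ Ideal.span ({a} : Set R) :=
            Ideal.mul_mem_left _ _ hy
          exact Ideal.span_mono (by simp) this
        have htz : t * z ∈ Ideal.span {a, b} := by
          have : t * z ∈ Ideal.span ({b} : Set R) := htb z hz
          exact Ideal.span_mono (by simp) this
        have : u * (t * (y + z)) ∈ Ideal.span {c} := by
          apply huc
          rw [mul_add]
          exact Ideal.add_mem _ hty htz
        simpa [mul_assoc] using this
      · refine hc.trans ?_
        rw [Finset.coe_insert]
        simp only [Ideal.span_insert]
        exact sup_le_sup_left hbT _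
end

section
/- Let R be a commutative ring with identity and S a multiplicatively closed subset of R. If R is an S-Bézout ring, then the localization S⁻¹R is a Bézout ring (every finitely generated ideal of S⁻¹R is principal). -/
/-- If `R` is an `S`-Bézout ring, then the localization `S⁻¹R` is a Bézout ring. -/
theorem isBezout_localization_of_sBezout {R : Type*} [CommRing R] (S : Submonoid R)
    (h : IsSBezout R S) : IsBezout (Localization S) := by
  constructor
  intro J hJ
  obtain ⟨T, hT⟩ := hJ
  set f := algebraMap R (Localization S) with hf
  choose x hx using fun t : Localization S => IsLocalization.surj S t
  set I : Ideal R := Ideal.span ((fun t => (x t).1) '' (T : Set (Localization S))) with hI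
  have hfg : I.FG := Submodule.fg_span (T.finite_toSet.image _)
  have hmap : Ideal.map f I = J := by
    apply le_antisymm
    · rw [Ideal.map_le_iff_le_comap, hI, Ideal.span_le]
      rintro _ ⟨t, ht, rfl⟩
      have htJ : t ∈ J := hT ▸ Ideal.subset_span ht
      simp only [SetLike.mem_coe, Ideal.mem_comap, hf]
      rw [← hx t]
      exact J.mul_mem_right _ htJ
    · rw [← hT, Ideal.span_le]
      intro t ht
      have h1 : f (x t).1 ∈ Ideal.map f I :=
        Ideal.mem_map_of_mem f (Ideal.subset_span ⟨t, ht, rfl⟩)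
      have hu := IsLocalization.map_units (Localization S) (x t).2
      rw [← hx t, mul_comm] at h1
      exact ((Ideal.map f I).unit_mul_mem_iff_mem hu).mp h1
  obtain ⟨s, hsS, a, ha1, ha2⟩ := h I hfg
  refine ⟨⟨f a, ?_⟩⟩
  apply le_antisymm
  · rw [← hmap, Ideal.map_le_iff_le_comap]
    intro y hy
    have hu := IsLocalization.map_units (Localization S) (⟨s, hsS⟩ : S)
    obtain ⟨c, hc⟩ := Ideal.mem_span_singleton'.mp (ha1 y hy)
    simp only [Ideal.mem_comap]
    have h1 : f s * f y ∈ Ideal.span {f a} := by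
      rw [← map_mul, ← hc, map_mul]
      exact Ideal.mem_span_singleton'.mpr ⟨f c, rfl⟩
    exact ((Ideal.span {f a}).unit_mul_mem_iff_mem hu).mp h1
  · have : f a ∈ J := hmap ▸ Ideal.mem_map_of_mem f (ha2 (Ideal.mem_span_singleton_self a))
    simpa [Ideal.span_le] using this
end

section
/- Let R be a commutative ring with identity and S a multiplicatively closed subset of R, and assume that R is S-Noetherian (i.e., every ideal of R is S-finite). Then R is an S-Bézout ring if and only if the localization S⁻¹R is a Bézout ring. -/
/-- An ideal `I` of `R` is `S`-finite if there exist `s ∈ S` and a finitely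
generated ideal `J` of `R` such that `sI ⊆ J ⊆ I`. -/
def Ideal.IsSFinite {R : Type*} [CommRing R] (S : Set R) (I : Ideal R) : Prop :=
  ∃ s ∈ S, ∃ J : Ideal R, J.FG ∧ (∀ x ∈ I, s * x ∈ J) ∧ J ≤ I

/-!
Compare an ideal `I` of `R` with its extension `S⁻¹I`. A sandwich `sI ⊆ aR ⊆ I` with `s ∈ S`
forces `S⁻¹I = (a/1)`, and every finitely generated ideal of `S⁻¹R` is the extension of a
finitely generated ideal of `R`. Conversely, if `S⁻¹I = (g)` one may take `g = a/1` with `a ∈ I`;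
then each generator `x` of `I` satisfies `s_x x ∈ aR` for some `s_x ∈ S`, and when `I` is
finitely generated the product of the `s_x` works for all of `I` at once.
-/

theorem Submodule.FG.exists_forall_smul_mem {R M : Type*} [CommSemiring R] [AddCommMonoid M]
    [Module R M] (S : Submonoid R) {N P : Submodule R M} (hN : N.FG)
    (h : ∀ x ∈ N, ∃ s ∈ S, s • x ∈ P) : ∃ s ∈ S, ∀ x ∈ N, s • x ∈ P := by
  induction N, hN using Submodule.fg_induction with
  | singleton x =>
    obtain ⟨s, hs, hsx⟩ := h x (Submodule.mem_span_singleton_self x)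
    refine ⟨s, hs, fun y hy => ?_⟩
    obtain ⟨r, rfl⟩ := Submodule.mem_span_singleton.mp hy
    rw [smul_comm]
    exact P.smul_mem r hsx
  | sup N₁ N₂ _ _ ih₁ ih₂ =>
    obtain ⟨s₁, hs₁, h₁⟩ := ih₁ fun x hx => h x (Submodule.mem_sup_left hx)
    obtain ⟨s₂, hs₂, h₂⟩ := ih₂ fun x hx => h x (Submodule.mem_sup_right hx)
    refine ⟨s₁ * s₂, S.mul_mem hs₁ hs₂, fun y hy => ?_⟩
    obtain ⟨y₁, hy₁, y₂, hy₂, rfl⟩ := Submodule.mem_sup.mp hy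
    rw [smul_add]
    refine P.add_mem ?_ ?_
    · rw [mul_comm, mul_smul]
      exact P.smul_mem s₂ (h₁ y₁ hy₁)
    · rw [mul_smul]
      exact P.smul_mem s₁ (h₂ y₂ hy₂)

namespace IsLocalization

variable {R A : Type*} [CommRing R] [CommRing A] [Algebra R A]

theorem map_algebraMap_eq_of_smul_mem_of_le (S : Submonoid R) [IsLocalization S A] {s : R}
    (hs : s ∈ S) {I J : Ideal R} (hsI : ∀ x ∈ I, s * x ∈ J) (hJI : J ≤ I) :
    J.map (algebraMap R A) = I.map (algebraMap R A) := by
  refine le_antisymm (Ideal.map_mono hJI) (Ideal.map_le_iff_le_comap.mpr fun x hx => ?_)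
  exact (algebraMap_mem_map_algebraMap_iff S (S := A) J x).mpr ⟨s, hs, hsI x hx⟩

theorem isPrincipal_map_of_isSPrincipal (S : Submonoid R) [IsLocalization S A] {I : Ideal R}
    (hI : I.IsSPrincipal S) :
    (I.map (algebraMap R A)).IsPrincipal := by
  obtain ⟨s, hs, a, hsI, haI⟩ := hI
  refine ⟨algebraMap R A a, ?_⟩
  rw [← map_algebraMap_eq_of_smul_mem_of_le S hs hsI haI, Ideal.map_span, Set.image_singleton]

theorem exists_fg_map_algebraMap_eq (S : Submonoid R) [IsLocalization S A] {J : Ideal A}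
    (hJ : J.FG) :
    ∃ I : Ideal R, I.FG ∧ I.map (algebraMap R A) = J := by
  induction J, hJ using Submodule.fg_induction with
  | singleton x =>
    obtain ⟨⟨a, t⟩, rfl⟩ := mk'_surjective S x
    dsimp only
    refine ⟨Ideal.span {a}, Submodule.fg_span_singleton a, ?_⟩
    rw [Ideal.map_span, Set.image_singleton, ← mk'_spec A a t,
      Ideal.span_singleton_mul_right_unit (map_units A t)]
  | sup J₁ J₂ _ _ ih₁ ih₂ =>
    obtain ⟨I₁, hI₁, rfl⟩ := ih₁
    obtain ⟨I₂, hI₂, rfl⟩ := ih₂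
    exact ⟨I₁ ⊔ I₂, Submodule.FG.sup hI₁ hI₂, Ideal.map_sup _ _ _⟩

theorem exists_mem_span_algebraMap_eq_map (S : Submonoid R) [IsLocalization S A] {I : Ideal R}
    (hI : (I.map (algebraMap R A)).IsPrincipal) :
    ∃ a ∈ I, Ideal.span {algebraMap R A a} = I.map (algebraMap R A) := by
  obtain ⟨g, hg⟩ := hI
  have hgI : g ∈ I.map (algebraMap R A) := hg ▸ Submodule.mem_span_singleton_self g
  obtain ⟨⟨⟨a, haI⟩, t⟩, hgt⟩ := (mem_map_algebraMap_iff S A).mp hgI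
  refine ⟨a, haI, ?_⟩
  rw [hg, ← hgt, Ideal.span_singleton_mul_right_unit (map_units A t)]

theorem isSPrincipal_of_isPrincipal_map (S : Submonoid R) [IsLocalization S A] {I : Ideal R}
    (hIfg : I.FG) (hI : (I.map (algebraMap R A)).IsPrincipal) : I.IsSPrincipal S := by
  obtain ⟨a, haI, ha⟩ := exists_mem_span_algebraMap_eq_map S hI
  have hmap : (Ideal.span {a}).map (algebraMap R A) = I.map (algebraMap R A) := by
    rw [Ideal.map_span, Set.image_singleton, ha]
  obtain ⟨s, hs, hsI⟩ := Submodule.FG.exists_forall_smul_mem S hIfg fun x hx =>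
    (algebraMap_mem_map_algebraMap_iff S (S := A) _ x).mp (hmap ▸ Ideal.mem_map_of_mem _ hx)
  exact ⟨s, hs, a, hsI, (Ideal.span_singleton_le_iff_mem I).mpr haI⟩

theorem isSBezout_iff_isBezout (S : Submonoid R) [IsLocalization S A] :
    IsSBezout R S ↔ IsBezout A := by
  refine ⟨fun h => ⟨fun J hJ => ?_⟩, fun h I hI => ?_⟩
  · obtain ⟨I, hIfg, rfl⟩ := exists_fg_map_algebraMap_eq S hJ
    exact isPrincipal_map_of_isSPrincipal S (h I hIfg)
  · exact isSPrincipal_of_isPrincipal_map S hI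
      (IsBezout.isPrincipal_of_FG _ (Ideal.FG.map hI (algebraMap R A)))

end IsLocalization

theorem sBezout_iff_isBezout_localization_of_sNoetherian_general {R : Type*} [CommRing R]
    (S : Submonoid R) :
    IsSBezout R S ↔ IsBezout (Localization S) :=
  IsLocalization.isSBezout_iff_isBezout S

/-- If `R` is `S`-Noetherian (every ideal of `R` is `S`-finite), then `R` is an
`S`-Bézout ring if and only if `S⁻¹R` is a Bézout ring. -/
theorem sBezout_iff_isBezout_localization_of_sNoetherian {R : Type*} [CommRing R]
    (S : Submonoid R) (hN : ∀ I : Ideal R, I.IsSFinite S) :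
    IsSBezout R S ↔ IsBezout (Localization S) :=
  sBezout_iff_isBezout_localization_of_sNoetherian_general S
end

section
/- Let R be a semilocal commutative ring (a ring having only finitely many maximal ideals). Then the following are equivalent: (1) R is a Bézout ring; (2) R is (R∖P)-Bézout for every prime ideal P of R; (3) R is (R∖M)-Bézout for every maximal ideal M of R. -/
/-!
Bézout implies `S`-Bézout for any `S ∋ 1`, so only (3) ⇒ (1) has content. Given a finitely
generated ideal `I`, pick for each of the finitely many maximal ideals `M` data
`s_M ∉ M`, `s_M I ⊆ (b_M) ⊆ I`, and an element `t_M` lying in every maximal ideal except `M`.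
Then `a = ∑ t_M b_M` satisfies `a ≡ t_M b_M (mod M I)` for every `M`, which forces
`s_M a = c b_M` with `c ∉ M`, hence `c s_M I ⊆ (a)`. So the colon ideal `(a) : I` lies in no
maximal ideal, and `I = (a)`.
-/

section

variable {R : Type*} [CommRing R]

theorem Submodule.IsPrincipal.isSPrincipal {S : Set R} (hS : 1 ∈ S) {I : Ideal R}
    (hI : I.IsPrincipal) : I.IsSPrincipal S := by
  obtain ⟨a, rfl⟩ := hI
  exact ⟨1, hS, a, fun x hx => by rwa [one_mul], le_rfl⟩

theorem IsBezout.isSBezout [IsBezout R] {S : Set R} (hS : 1 ∈ S) : IsSBezout R S :=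
  fun I hI => (IsBezout.isPrincipal_of_FG I hI).isSPrincipal hS

theorem Submodule.le_of_forall_isMaximal_exists_notMem_smul_mem {M : Type*} [AddCommGroup M]
    [Module R M] {N N' : Submodule R M}
    (h : ∀ P : Ideal R, P.IsMaximal → ∃ u ∉ P, ∀ x ∈ N, u • x ∈ N') : N ≤ N' := by
  suffices N'.colon N = ⊤ from (Submodule.colon_eq_top_iff_subset _).1 this
  by_contra hne
  obtain ⟨P, hP, hle⟩ := Ideal.exists_le_maximal _ hne
  obtain ⟨u, huP, hu⟩ := h P hP
  exact huP (hle (Submodule.mem_colon.2 hu))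

theorem Ideal.IsPrime.exists_notMem_forall_mem {ι : Type*} {P : Ideal R} (hP : P.IsPrime)
    {s : Finset ι} {f : ι → Ideal R} (hf : ∀ i ∈ s, ¬f i ≤ P) :
    ∃ t ∉ P, ∀ i ∈ s, t ∈ f i := by
  have hinf : ¬s.inf f ≤ P := fun hle => by
    obtain ⟨i, hi, hiP⟩ := hP.inf_le'.1 hle
    exact hf i hi hiP
  obtain ⟨t, hts, htP⟩ := SetLike.not_le_iff_exists.1 hinf
  exact ⟨t, htP, fun i hi => Finset.inf_le (f := f) hi hts⟩

theorem Ideal.IsMaximal.exists_notMem_forall_mem_of_finite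
    (h : {I : Ideal R | I.IsMaximal}.Finite) {M : Ideal R} (hM : M.IsMaximal) :
    ∃ t ∉ M, ∀ M' : Ideal R, M'.IsMaximal → M' ≠ M → t ∈ M' := by
  classical
  obtain ⟨t, htM, ht⟩ := hM.isPrime.exists_notMem_forall_mem (s := h.toFinset.erase M) (f := id)
    fun M' hM' hle => by
      obtain ⟨hne, hM'max⟩ := Finset.mem_erase.1 hM'
      exact hne ((h.mem_toFinset.1 hM'max).eq_of_le hM.ne_top hle)
  exact ⟨t, htM, fun M' hM' hne => ht M' (Finset.mem_erase.2 ⟨hne, h.mem_toFinset.2 hM'⟩)⟩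

theorem Ideal.exists_notMem_mul_mem_span_of_sub_mem_mul {M I : Ideal R} (hM : M.IsPrime)
    {s b t a : R} (hs : s ∉ M) (hsb : ∀ x ∈ I, s * x ∈ span {b}) (ht : t ∉ M)
    (ha : a - t * b ∈ M * I) : ∃ u ∉ M, ∀ x ∈ I, u * x ∈ span {a} := by
  have hsI : span {s} * I ≤ span {b} := span_singleton_mul_le_iff.2 hsb
  have hdiff : s * (a - t * b) ∈ M * span {b} := by
    have : s * (a - t * b) ∈ span {s} * (M * I) := mul_mem_mul (mem_span_singleton_self s) ha
    rw [mul_left_comm] at this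
    exact mul_mono_right hsI this
  obtain ⟨m, hm, hmb⟩ := mem_mul_span_singleton.1 hdiff
  have hsa : s * a = (s * t + m) * b := by linear_combination hmb.symm
  have hc : s * t + m ∉ M := fun hmem =>
    hM.mul_notMem hs ht ((M.add_mem_iff_left hm).1 hmem)
  refine ⟨(s * t + m) * s, hM.mul_notMem hc hs, fun x hx => ?_⟩
  obtain ⟨y, hy⟩ := mem_span_singleton'.1 (hsb x hx)
  rw [mul_assoc, ← hy, ← mul_assoc, mul_comm _ y, mul_assoc, ← hsa]
  exact mul_mem_left _ y (mul_mem_left _ s (mem_span_singleton_self a))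

theorem Ideal.isPrincipal_of_forall_isMaximal_isSPrincipal
    (h : {I : Ideal R | I.IsMaximal}.Finite) {I : Ideal R}
    (hI : ∀ M : Ideal R, M.IsMaximal → I.IsSPrincipal (M : Set R)ᶜ) : I.IsPrincipal := by
  classical
  choose! s hs b hsb hbI using hI
  choose! t ht htM using fun (M : Ideal R) (hM : M.IsMaximal) =>
    hM.exists_notMem_forall_mem_of_finite h
  have hb : ∀ M : Ideal R, M.IsMaximal → b M ∈ I := fun M hM =>
    hbI M hM (mem_span_singleton_self _)
  set a := ∑ M ∈ h.toFinset, t M * b M with ha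
  have haI : span {a} ≤ I := (span_singleton_le_iff_mem I).2 <|
    sum_mem _ fun M hM => mul_mem_left _ _ (hb M (h.mem_toFinset.1 hM))
  refine ⟨a, le_antisymm (Submodule.le_of_forall_isMaximal_exists_notMem_smul_mem
    fun M hM => ?_) haI⟩
  refine exists_notMem_mul_mem_span_of_sub_mem_mul hM.isPrime (hs M hM) (hsb M hM) (ht M hM) ?_
  rw [ha, ← Finset.add_sum_erase _ _ (h.mem_toFinset.2 hM), add_sub_cancel_left]
  refine sum_mem _ fun M' hM' => ?_
  obtain ⟨hne, hM'max⟩ := Finset.mem_erase.1 hM'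
  exact mul_mem_mul (htM M' (h.mem_toFinset.1 hM'max) M hM hne.symm)
    (hb M' (h.mem_toFinset.1 hM'max))

end

/-- For a semilocal ring `R` (only finitely many maximal ideals), the following are
equivalent: (1) `R` is Bézout; (2) `R` is `(R∖P)`-Bézout for every prime `P`;
(3) `R` is `(R∖M)`-Bézout for every maximal ideal `M`. -/
theorem semilocal_bezout_tfae {R : Type*} [CommRing R]
    (h : {I : Ideal R | I.IsMaximal}.Finite) :
    List.TFAE [IsBezout R,
      ∀ P : Ideal R, P.IsPrime → IsSBezout R ((↑P : Set R)ᶜ),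
      ∀ M : Ideal R, M.IsMaximal → IsSBezout R ((↑M : Set R)ᶜ)] := by
  tfae_have 1 → 2 := fun _ P hP => IsBezout.isSBezout hP.one_notMem
  tfae_have 2 → 3 := fun h2 M hM => h2 M hM.isPrime
  tfae_have 3 → 1 := fun h3 =>
    ⟨fun I hI => Ideal.isPrincipal_of_forall_isMaximal_isSPrincipal h fun M hM => h3 M hM I hI⟩
  tfae_finish
end

section
/- Let R be a commutative ring, I a finitely generated ideal of R, and S a multiplicatively closed subset of R. If R is an S-Bézout ring, then the quotient ring R/I is an S̄-Bézout ring, where S̄ = {s + I : s ∈ S} is the image of S in R/I. -/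
/-- If `R` is an `S`-Bézout ring and `I` is a finitely generated ideal of `R`,
then `R/I` is an `S̄`-Bézout ring, where `S̄` is the image of `S` in `R/I`. -/
theorem sBezout_quotient {R : Type*} [CommRing R] (I : Ideal R) (hI : I.FG)
    (S : Submonoid R) (h : IsSBezout R S) :
    IsSBezout (R ⧸ I) (Ideal.Quotient.mk I '' (S : Set R)) := by
  intro J hJ
  obtain ⟨T, hT⟩ := hJ
  set g := Function.surjInv (Ideal.Quotient.mk_surjective (I := I)) with hg
  have hgi : ∀ x : R ⧸ I, Ideal.Quotient.mk I (g x) = x := fun x =>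
    Function.surjInv_eq _ x
  classical
  set K : Ideal R := I ⊔ Ideal.span (↑(T.image g)) with hK
  have hKfg : K.FG := Submodule.FG.sup hI ⟨T.image g, rfl⟩
  have hmap : Ideal.map (Ideal.Quotient.mk I) K = J := by
    rw [hK, Ideal.map_sup, Ideal.map_quotient_self, Ideal.map_span]
    have : (Ideal.Quotient.mk I) '' ↑(T.image g) = ↑T := by
      ext x
      simp only [Finset.coe_image, Set.image_image, hgi, Set.image_id']
    rw [this, hT]
    simp
  obtain ⟨s, hs, a, h1, h2⟩ := h K hKfg
  refine ⟨Ideal.Quotient.mk I s, ⟨s, hs, rfl⟩, Ideal.Quotient.mk I a, ?_, ?_⟩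
  · intro x hx
    obtain ⟨y, hyK, rfl⟩ : ∃ y ∈ K, Ideal.Quotient.mk I y = x := by
      rw [← hmap] at hx
      exact (Ideal.mem_map_iff_of_surjective _ Ideal.Quotient.mk_surjective).mp hx
    rw [← map_mul]
    have := h1 y hyK
    have hmem : Ideal.Quotient.mk I (s * y) ∈
        Ideal.map (Ideal.Quotient.mk I) (Ideal.span {a}) :=
      Ideal.mem_map_of_mem _ this
    rwa [Ideal.map_span, Set.image_singleton] at hmem
  · have : Ideal.map (Ideal.Quotient.mk I) (Ideal.span {a}) ≤
        Ideal.map (Ideal.Quotient.mk I) K := Ideal.map_mono h2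
    rwa [Ideal.map_span, Set.image_singleton, hmap] at this
end

section
/- Let R be a commutative ring, I a finitely generated ideal of R, and S a multiplicatively closed subset of R. Suppose there exists s₀ ∈ S with s₀I = 0. If the quotient ring R/I is an S̄-Bézout ring, where S̄ = {s + I : s ∈ S} is the image of S in R/I, then R is an S-Bézout ring. -/
/-- Let `I` be a finitely generated ideal of `R` and suppose there is `s₀ ∈ S` with
`s₀I = 0`. If `R/I` is `S̄`-Bézout, where `S̄` is the image of `S` in `R/I`, then
`R` is `S`-Bézout. -/
theorem sBezout_of_sBezout_quotient {R : Type*} [CommRing R] (I : Ideal R) (hI : I.FG)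
    (S : Submonoid R) (s₀ : R) (hs₀ : s₀ ∈ S) (hs₀I : ∀ x ∈ I, s₀ * x = 0)
    (h : IsSBezout (R ⧸ I) (Ideal.Quotient.mk I '' (S : Set R))) :
    IsSBezout R S := by
  intro J hJ
  obtain ⟨sb, hsb, ab, h1, h2⟩ := h (J.map (Ideal.Quotient.mk I)) (Ideal.FG.map hJ _)
  obtain ⟨s, hsS, rfl⟩ := hsb
  obtain ⟨b, rfl⟩ := Ideal.Quotient.mk_surjective ab
  have hb : b ∈ J ⊔ I := by
    rw [← Ideal.mem_quotient_iff_mem_sup]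
    exact h2 (Ideal.mem_span_singleton_self _)
  obtain ⟨j, hj, i, hi, rfl⟩ := Submodule.mem_sup.mp hb
  refine ⟨s₀ * s, S.mul_mem hs₀ hsS, s₀ * (j + i), ?_, ?_⟩
  · intro x hx
    have hx' : (Ideal.Quotient.mk I) s * (Ideal.Quotient.mk I) x ∈
        Ideal.span {(Ideal.Quotient.mk I) (j + i)} :=
      h1 _ (Ideal.mem_map_of_mem _ hx)
    rw [Ideal.mem_span_singleton] at hx' ⊢
    obtain ⟨cb, hcb⟩ := hx'
    obtain ⟨c, rfl⟩ := Ideal.Quotient.mk_surjective cb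
    rw [← map_mul, ← map_mul] at hcb
    have hdiff : s * x - (j + i) * c ∈ I := by
      rwa [Ideal.Quotient.eq] at hcb
    refine ⟨c, ?_⟩
    have h0 : s₀ * (s * x - (j + i) * c) = 0 := hs₀I _ hdiff
    have : s₀ * (s * x) = s₀ * ((j + i) * c) := by linear_combination h0
    rw [mul_assoc]
    linear_combination this
  · rw [Ideal.span_le, Set.singleton_subset_iff]
    have : s₀ * (j + i) = s₀ * j := by
      have h0 : s₀ * i = 0 := hs₀I _ hi
      ring_nf
      linear_combination h0
    rw [this]
    exact J.mul_mem_left _ hj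
end

section
/- Let f : A → B be a homomorphism of commutative rings and S a multiplicatively closed subset of A. Assume that for every ideal I of B, the extension to B of the contraction f⁻¹(I) equals I (i.e., the ideal of B generated by f(f⁻¹(I)) is I), and that for every finitely generated ideal J of B, the contraction f⁻¹(J) is a finitely generated ideal of A. If A is an S-Bézout ring, then B is an f(S)-Bézout ring. -/
/-- Let `f : A → B` be a ring homomorphism such that `I^{ce} = I` for every ideal
`I` of `B` and `J^c` is finitely generated for every finitely generated ideal `J`
of `B`. If `A` is `S`-Bézout, then `B` is `f(S)`-Bézout. -/
theorem sBezout_of_ringHom {A B : Type*} [CommRing A] [CommRing B] (f : A →+* B)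
    (S : Submonoid A)
    (hce : ∀ I : Ideal B, Ideal.map f (Ideal.comap f I) = I)
    (hfg : ∀ J : Ideal B, J.FG → (Ideal.comap f J).FG)
    (h : IsSBezout A S) : IsSBezout B (f '' (S : Set A)) := by
  intro J hJ
  obtain ⟨s, hs, a, h1, h2⟩ := h (Ideal.comap f J) (hfg J hJ)
  have hspan : Ideal.span {f a} = Ideal.map f (Ideal.span {a}) := by
    rw [Ideal.map_span, Set.image_singleton]
  refine ⟨f s, ⟨s, hs, rfl⟩, f a, ?_, ?_⟩
  · intro x hx
    rw [← hce J] at hx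
    have hx' : x ∈ Ideal.span (f '' (Ideal.comap f J : Set A)) := hx
    refine Submodule.span_induction ?_ ?_ ?_ ?_ hx'
    · rintro y ⟨i, hi, rfl⟩
      rw [← map_mul, hspan]
      exact Ideal.mem_map_of_mem f (h1 i hi)
    · simp
    · intro y z _ _ hy hz
      rw [mul_add]; exact Ideal.add_mem _ hy hz
    · intro r y _ hy
      rw [smul_eq_mul, mul_comm r y, ← mul_assoc]
      exact Ideal.mul_mem_right r _ hy
  · rw [hspan, ← hce J]
    exact Ideal.map_mono h2
end

section
/- Let R₁, R₂ be commutative rings with multiplicatively closed subsets S₁ ⊆ R₁ and S₂ ⊆ R₂, and consider the multiplicatively closed subset S₁ × S₂ of the product ring R₁ × R₂. Then R₁ × R₂ is an (S₁ × S₂)-Bézout ring if and only if R₁ is an S₁-Bézout ring and R₂ is an S₂-Bézout ring. -/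
/-- `R₁ × R₂` is an `(S₁ × S₂)`-Bézout ring if and only if `R₁` is `S₁`-Bézout
and `R₂` is `S₂`-Bézout. -/
theorem sBezout_prod_iff {R₁ R₂ : Type*} [CommRing R₁] [CommRing R₂]
    (S₁ : Submonoid R₁) (S₂ : Submonoid R₂) :
    IsSBezout (R₁ × R₂) ((S₁ : Set R₁) ×ˢ (S₂ : Set R₂)) ↔
      IsSBezout R₁ S₁ ∧ IsSBezout R₂ S₂ := by
  constructor
  · intro h
    constructor
    · intro I hI
      obtain ⟨T, hT⟩ := hI
      set J : Ideal (R₁ × R₂) := Ideal.span ((fun a => ((a, 1) : R₁ × R₂)) '' ↑T) with hJ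
      obtain ⟨s, hs, a, hsa, haJ⟩ := h J (Submodule.fg_span (T.finite_toSet.image _))
      have hmap : Ideal.map (RingHom.fst R₁ R₂) J = I := by
        rw [hJ, Ideal.map_span, ← hT, Set.image_image]
        simp
      refine ⟨s.1, hs.1, a.1, ?_, ?_⟩
      · intro x hx
        rw [← hmap] at hx
        obtain ⟨y, hy, rfl⟩ :=
          (Ideal.mem_map_iff_of_surjective _ Prod.fst_surjective).mp hx
        have := hsa y hy
        rw [Ideal.mem_span_singleton] at this ⊢
        obtain ⟨c, hc⟩ := this
        exact ⟨c.1, congrArg Prod.fst hc⟩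
      · rw [Ideal.span_singleton_le_iff_mem, ← hmap]
        exact Ideal.mem_map_of_mem _ (haJ (Ideal.mem_span_singleton_self a))
    · intro I hI
      obtain ⟨T, hT⟩ := hI
      set J : Ideal (R₁ × R₂) := Ideal.span ((fun a => ((1, a) : R₁ × R₂)) '' ↑T) with hJ
      obtain ⟨s, hs, a, hsa, haJ⟩ := h J (Submodule.fg_span (T.finite_toSet.image _))
      have hmap : Ideal.map (RingHom.snd R₁ R₂) J = I := by
        rw [hJ, Ideal.map_span, ← hT, Set.image_image]
        simp
      refine ⟨s.2, hs.2, a.2, ?_, ?_⟩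
      · intro x hx
        rw [← hmap] at hx
        obtain ⟨y, hy, rfl⟩ :=
          (Ideal.mem_map_iff_of_surjective _ Prod.snd_surjective).mp hx
        have := hsa y hy
        rw [Ideal.mem_span_singleton] at this ⊢
        obtain ⟨c, hc⟩ := this
        exact ⟨c.2, congrArg Prod.snd hc⟩
      · rw [Ideal.span_singleton_le_iff_mem, ← hmap]
        exact Ideal.mem_map_of_mem _ (haJ (Ideal.mem_span_singleton_self a))
  · rintro ⟨h₁, h₂⟩ I hI
    obtain ⟨s₁, hs₁, a₁, hsa₁, ha₁⟩ := h₁ (I.map (RingHom.fst R₁ R₂)) (hI.map _)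
    obtain ⟨s₂, hs₂, a₂, hsa₂, ha₂⟩ := h₂ (I.map (RingHom.snd R₁ R₂)) (hI.map _)
    refine ⟨(s₁, s₂), ⟨hs₁, hs₂⟩, (a₁, a₂), ?_, ?_⟩
    · intro x hx
      have hx1 := hsa₁ x.1 (Ideal.mem_map_of_mem _ hx)
      have hx2 := hsa₂ x.2 (Ideal.mem_map_of_mem _ hx)
      rw [Ideal.mem_span_singleton] at hx1 hx2 ⊢
      obtain ⟨c₁, hc₁⟩ := hx1
      obtain ⟨c₂, hc₂⟩ := hx2
      exact ⟨(c₁, c₂), Prod.ext hc₁ hc₂⟩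
    · rw [Ideal.span_singleton_le_iff_mem, Ideal.ideal_prod_eq I]
      exact ⟨ha₁ (Ideal.mem_span_singleton_self a₁), ha₂ (Ideal.mem_span_singleton_self a₂)⟩
end

section
/- Let A be a commutative ring, E an A-module, F a submodule of E, and S a multiplicatively closed subset of A. Then F is S-cyclic if and only if the ideal 0 ∝ F = {(0, e) : e ∈ F} of the trivial ring extension A ∝ E is an (S ∝ E)-principal ideal of A ∝ E, where S ∝ E = {(s, e) : s ∈ S, e ∈ E}. -/
/-- A submodule `F` of an `A`-module `E` is `S`-cyclic if there exist `s ∈ S` and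
`e ∈ F` such that `sF ⊆ Ae ⊆ F`. -/
def Submodule.IsSCyclic {A E : Type*} [CommRing A] [AddCommGroup E] [Module A E]
    (S : Set A) (F : Submodule A E) : Prop :=
  ∃ s ∈ S, ∃ e ∈ F, (∀ m ∈ F, s • m ∈ Submodule.span A {e}) ∧ Submodule.span A {e} ≤ F

/-- The ideal `0 ∝ F = {(0, e) : e ∈ F}` of the trivial ring extension `A ∝ E`. -/
def TrivSqZeroExt.idealInr (A : Type*) {E : Type*} [CommRing A] [AddCommGroup E]
    [Module A E] [Module Aᵐᵒᵖ E] [IsCentralScalar A E] (F : Submodule A E) :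
    Ideal (TrivSqZeroExt A E) where
  carrier := {x | x.fst = 0 ∧ x.snd ∈ F}
  add_mem' := fun ha hb => ⟨by simp [TrivSqZeroExt.fst_add, ha.1, hb.1],
    by rw [TrivSqZeroExt.snd_add]; exact F.add_mem ha.2 hb.2⟩
  zero_mem' := ⟨rfl, F.zero_mem⟩
  smul_mem' := fun c x hx => by
    refine ⟨?_, ?_⟩
    · show (c * x).fst = 0
      rw [TrivSqZeroExt.fst_mul, hx.1, mul_zero]
    · show (c * x).snd ∈ F
      rw [TrivSqZeroExt.snd_mul, hx.1]
      simpa using F.smul_mem c.fst hx.2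

/-- `F` is `S`-cyclic if and only if `0 ∝ F` is an `(S ∝ E)`-principal ideal of
the trivial ring extension `A ∝ E`, where `S ∝ E = {(s, e) : s ∈ S, e ∈ E}`. -/
theorem isSCyclic_iff_idealInr_isSPrincipal {A E : Type*} [CommRing A] [AddCommGroup E]
    [Module A E] [Module Aᵐᵒᵖ E] [IsCentralScalar A E] (S : Submonoid A)
    (F : Submodule A E) :
    F.IsSCyclic (S : Set A) ↔
      (TrivSqZeroExt.idealInr A F).IsSPrincipal
        {x : TrivSqZeroExt A E | x.fst ∈ S} := by
  
  have memI : ∀ x : TrivSqZeroExt A E, x ∈ TrivSqZeroExt.idealInr A F ↔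
      x.fst = 0 ∧ x.snd ∈ F := fun x => Iff.rfl
  constructor
  · rintro ⟨s, hs, e, heF, hsF, hspan⟩
    refine ⟨TrivSqZeroExt.inl s, hs, TrivSqZeroExt.inr e, ?_, ?_⟩
    · intro x hx
      obtain ⟨hx0, hxF⟩ := (memI x).mp hx
      obtain ⟨r, hr⟩ := Submodule.mem_span_singleton.mp (hsF x.snd hxF)
      rw [Ideal.mem_span_singleton']
      refine ⟨TrivSqZeroExt.inl r, ?_⟩
      ext
      · simp [hx0]
      · simp [hr, hx0]
    · rw [Ideal.span_le, Set.singleton_subset_iff]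
      exact (memI _).mpr ⟨TrivSqZeroExt.fst_inr A e, by simpa using heF⟩
  · rintro ⟨t, ht, a, hmul, hle⟩
    obtain ⟨ha0, haF⟩ := (memI a).mp (hle (Ideal.subset_span rfl))
    refine ⟨t.fst, ht, a.snd, haF, ?_, ?_⟩
    · intro m hm
      have h := hmul (TrivSqZeroExt.inr m) ((memI _).mpr ⟨TrivSqZeroExt.fst_inr A m, hm⟩)
      obtain ⟨r, hr⟩ := Ideal.mem_span_singleton'.mp h
      have h2 := congrArg TrivSqZeroExt.snd hr
      rw [Submodule.mem_span_singleton]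
      refine ⟨r.fst, ?_⟩
      simpa [TrivSqZeroExt.snd_mul, ha0] using h2
    · rw [Submodule.span_le, Set.singleton_subset_iff]
      exact haF
end

section
/- Let A be a commutative ring, E a finitely generated A-module, S₀ a multiplicatively closed subset of A, R = A ∝ E the trivial ring extension of A by E, and S = S₀ ∝ E = {(s, e) : s ∈ S₀, e ∈ E}. If R is an S-Bézout ring, then A is an S₀-Bézout ring and every finitely generated submodule F of E is S₀-cyclic. -/
/-- Let `E` be a finitely generated `A`-module, `R = A ∝ E` the trivial ring
extension and `S = S₀ ∝ E`. If `R` is `S`-Bézout, then `A` is `S₀`-Bézout and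
every finitely generated submodule of `E` is `S₀`-cyclic. -/
theorem sBezout_trivSqZeroExt_imp {A E : Type*} [CommRing A] [AddCommGroup E]
    [Module A E] [Module Aᵐᵒᵖ E] [IsCentralScalar A E] [Module.Finite A E]
    (S₀ : Submonoid A)
    (h : IsSBezout (TrivSqZeroExt A E) {x : TrivSqZeroExt A E | x.fst ∈ S₀}) :
    IsSBezout A S₀ ∧ ∀ F : Submodule A E, F.FG → F.IsSCyclic (S₀ : Set A) := by
  open TrivSqZeroExt in
  constructor
  · intro I hI
    obtain ⟨s, hs, c, hc1, hc2⟩ := h (I.map (inlHom A E)) (Ideal.FG.map hI _)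
    refine ⟨s.fst, hs, c.fst, ?_, ?_⟩
    · intro x hx
      have hx' : (inl x : TrivSqZeroExt A E) ∈ I.map (inlHom A E) :=
        Ideal.mem_map_of_mem _ hx
      have h1 := hc1 _ hx'
      rw [Ideal.mem_span_singleton] at h1 ⊢
      obtain ⟨r, hr⟩ := h1
      refine ⟨r.fst, ?_⟩
      have h2 := congrArg TrivSqZeroExt.fst hr
      simpa using h2
    · rw [Ideal.span_le, Set.singleton_subset_iff]
      have hcJ : c ∈ I.map (inlHom A E) := hc2 (Ideal.mem_span_singleton_self c)
      have hle : I.map (inlHom A E) ≤ Ideal.comap (fstHom A A E).toRingHom I := by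
        rw [Ideal.map_le_iff_le_comap]
        intro a ha
        simpa [Ideal.mem_comap] using ha
      exact hle hcJ
  · intro F hF
    obtain ⟨T, hT⟩ := hF
    set J : Ideal (TrivSqZeroExt A E) := Ideal.span (inr '' ↑T) with hJ
    have hJfg : J.FG := by
      classical
      exact ⟨T.image inr, by rw [Finset.coe_image]⟩
    have hmem : ∀ m ∈ F, (inr m : TrivSqZeroExt A E) ∈ J := by
      intro m hm
      rw [← hT] at hm
      induction hm using Submodule.span_induction with
      | mem x hx => exact Ideal.subset_span ⟨x, hx, rfl⟩
      | zero => simp only [inr_zero]; exact J.zero_mem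
      | add x y _ _ hx hy => rw [inr_add]; exact J.add_mem hx hy
      | smul a x _ hx => rw [← inl_mul_inr]; exact J.mul_mem_left _ hx
    have hbound : ∀ x ∈ J, x.fst = 0 ∧ x.snd ∈ F := by
      intro x hx
      induction hx using Submodule.span_induction with
      | mem x hx =>
        obtain ⟨t, ht, rfl⟩ := hx
        exact ⟨rfl, hT ▸ Submodule.subset_span ht⟩
      | zero => exact ⟨rfl, F.zero_mem⟩
      | add x y _ _ hx hy =>
        exact ⟨by simp [hx.1, hy.1], by rw [snd_add]; exact F.add_mem hx.2 hy.2⟩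
      | smul r x _ hx =>
        constructor
        · show (r * x).fst = 0
          rw [fst_mul, hx.1, mul_zero]
        · show (r * x).snd ∈ F
          rw [snd_mul, hx.1]
          simpa using F.smul_mem r.fst hx.2
    obtain ⟨s, hs, c, hc1, hc2⟩ := h J hJfg
    have hcJ : c ∈ J := hc2 (Ideal.mem_span_singleton_self c)
    obtain ⟨hc0, hcF⟩ := hbound c hcJ
    refine ⟨s.fst, hs, c.snd, hcF, ?_, ?_⟩
    · intro m hm
      have h1 := hc1 _ (hmem m hm)
      rw [Ideal.mem_span_singleton] at h1
      obtain ⟨r, hr⟩ := h1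
      rw [Submodule.mem_span_singleton]
      refine ⟨r.fst, ?_⟩
      have h2 := congrArg TrivSqZeroExt.snd hr
      simp [snd_mul, hc0, op_smul_eq_smul] at h2
      exact h2.symm
    · rw [Submodule.span_le, Set.singleton_subset_iff]
      exact hcF
end

section
/- Let A be a commutative ring, E a finitely generated A-module, S₀ a multiplicatively closed subset of A, R = A ∝ E the trivial ring extension of A by E, and S = S₀ ∝ E = {(s, e) : s ∈ S₀, e ∈ E}. Assume every ideal of R is homogeneous, i.e., every ideal J of R is of the form I ∝ F = {(a, e) : a ∈ I, e ∈ F} for some ideal I of A and some submodule F of E with IE ⊆ F. If A is an S₀-Bézout ring and every finitely generated submodule of E is S₀-cyclic, then R is an S-Bézout ring. -/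
/-!
Write `J = I ∝ F`. Both components are images of `J`, which is a finitely generated `A`-module
because `A ∝ E` is module-finite over `A`; so `I` and `F` are finitely generated. If
`sI ⊆ aA ⊆ I` and `tF ⊆ Ae ⊆ F`, then `g = (a, e)` works with the multiplier `(st, 0)`: for
`x ∈ J` with `s x₁ = b a` and `t x₂ = l e` one has `(st, 0) x = (tb, 0) (a, 0) + (sl, 0) (0, e)`,
and homogeneity of the principal ideal `(g)` puts `(a, 0)` and `(0, e)` in it.
-/

namespace TrivSqZeroExt

instance moduleFinite {R M : Type*} [Semiring R] [AddCommMonoid M] [Module R M]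
    [Module.Finite R M] : Module.Finite R (TrivSqZeroExt R M) :=
  inferInstanceAs (Module.Finite R (R × M))

variable {A E : Type*} [CommRing A] [AddCommGroup E] [Module A E] [Module Aᵐᵒᵖ E]
  [IsCentralScalar A E]

theorem fg_restrictScalars_of_fg [Module.Finite A E] {J : Ideal (TrivSqZeroExt A E)}
    (hJ : J.FG) : (J.restrictScalars A).FG := by
  have : Module.Finite (TrivSqZeroExt A E) J := Module.Finite.iff_fg.mpr hJ
  have : Module.Finite A J := Module.Finite.trans (TrivSqZeroExt A E) J
  exact Module.Finite.iff_fg.mp this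

section Homogeneous

variable {J : Ideal (TrivSqZeroExt A E)} {I : Ideal A} {F : Submodule A E}
  (hJ : ∀ x : TrivSqZeroExt A E, x ∈ J ↔ x.fst ∈ I ∧ x.snd ∈ F)
include hJ

theorem inl_fst_mem_of_homogeneous {x : TrivSqZeroExt A E} (hx : x ∈ J) : inl x.fst ∈ J :=
  (hJ _).2 ⟨((hJ x).1 hx).1, F.zero_mem⟩

theorem inr_snd_mem_of_homogeneous {x : TrivSqZeroExt A E} (hx : x ∈ J) : inr x.snd ∈ J :=
  (hJ _).2 ⟨I.zero_mem, ((hJ x).1 hx).2⟩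

theorem map_fstHom_restrictScalars_of_homogeneous :
    (J.restrictScalars A).map (fstHom A A E).toLinearMap = I := by
  ext c
  refine ⟨?_, fun hc => ⟨inl c, (hJ _).2 ⟨hc, F.zero_mem⟩, rfl⟩⟩
  rintro ⟨x, hx, rfl⟩
  exact ((hJ x).1 hx).1

theorem map_sndHom_restrictScalars_of_homogeneous :
    (J.restrictScalars A).map (sndHom A E) = F := by
  ext m
  refine ⟨?_, fun hm => ⟨inr m, (hJ _).2 ⟨I.zero_mem, hm⟩, rfl⟩⟩
  rintro ⟨x, hx, rfl⟩
  exact ((hJ x).1 hx).2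

theorem fg_and_fg_of_homogeneous [Module.Finite A E] (hfg : J.FG) : I.FG ∧ F.FG :=
  ⟨map_fstHom_restrictScalars_of_homogeneous hJ ▸ (fg_restrictScalars_of_fg hfg).map _,
    map_sndHom_restrictScalars_of_homogeneous hJ ▸ (fg_restrictScalars_of_fg hfg).map _⟩

theorem inl_mul_mem_of_homogeneous {K : Ideal (TrivSqZeroExt A E)} {s t a : A} {e : E}
    (hsa : ∀ c ∈ I, s * c ∈ Ideal.span {a}) (hte : ∀ m ∈ F, t • m ∈ Submodule.span A {e})
    (ha : inl a ∈ K) (he : inr e ∈ K) {x : TrivSqZeroExt A E} (hx : x ∈ J) :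
    inl (s * t) * x ∈ K := by
  obtain ⟨hxI, hxF⟩ := (hJ x).1 hx
  obtain ⟨b, hb⟩ := Ideal.mem_span_singleton'.1 (hsa _ hxI)
  obtain ⟨l, hl⟩ := Submodule.mem_span_singleton.1 (hte _ hxF)
  have hdecomp : inl (s * t) * x = inl (t * b) * inl a + inl (s * l) * inr e := by
    ext
    · simp only [fst_mul, fst_add, fst_inl, fst_inr, mul_zero, add_zero]
      linear_combination t * hb.symm
    · simp only [snd_mul, snd_add, fst_inl, snd_inl, snd_inr, fst_inr, smul_zero, add_zero,
        zero_add, mul_smul, hl]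
  rw [hdecomp]
  exact K.add_mem (K.mul_mem_left _ ha) (K.mul_mem_left _ he)

end Homogeneous

end TrivSqZeroExt

open TrivSqZeroExt

/-- Let `E` be a finitely generated `A`-module, `R = A ∝ E` the trivial ring
extension and `S = S₀ ∝ E`. Assume every ideal of `R` is homogeneous, i.e. of the
form `I ∝ F` for an ideal `I` of `A` and a submodule `F` of `E` with `IE ⊆ F`.
If `A` is `S₀`-Bézout and every finitely generated submodule of `E` is
`S₀`-cyclic, then `R` is `S`-Bézout. -/
theorem sBezout_trivSqZeroExt_of_homogeneous {A E : Type*} [CommRing A] [AddCommGroup E]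
    [Module A E] [Module Aᵐᵒᵖ E] [IsCentralScalar A E] [Module.Finite A E]
    (S₀ : Submonoid A)
    (hhom : ∀ J : Ideal (TrivSqZeroExt A E), ∃ (I : Ideal A) (F : Submodule A E),
      (∀ a ∈ I, ∀ e : E, a • e ∈ F) ∧
        ∀ x : TrivSqZeroExt A E, x ∈ J ↔ x.fst ∈ I ∧ x.snd ∈ F)
    (hA : IsSBezout A S₀)
    (hcyc : ∀ F : Submodule A E, F.FG → F.IsSCyclic (S₀ : Set A)) :
    IsSBezout (TrivSqZeroExt A E) {x : TrivSqZeroExt A E | x.fst ∈ S₀} := by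
  intro J hJfg
  obtain ⟨I, F, -, hJ⟩ := hhom J
  obtain ⟨hIfg, hFfg⟩ := fg_and_fg_of_homogeneous hJ hJfg
  obtain ⟨s, hs, a, hsa, haI⟩ := hA I hIfg
  obtain ⟨t, ht, e, heF, hte, -⟩ := hcyc F hFfg
  set g : TrivSqZeroExt A E := inl a + inr e
  obtain ⟨_, _, -, hg⟩ := hhom (Ideal.span {g})
  have hgg := Ideal.mem_span_singleton_self g
  refine ⟨inl (s * t), S₀.mul_mem hs ht, g, fun x hx => ?_, ?_⟩
  · refine inl_mul_mem_of_homogeneous hJ hsa hte ?_ ?_ hx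
    · simpa [g] using inl_fst_mem_of_homogeneous hg hgg
    · simpa [g] using inr_snd_mem_of_homogeneous hg hgg
  · rw [Ideal.span_singleton_le_iff_mem, hJ]
    simpa [g] using ⟨haI (Ideal.mem_span_singleton_self a), heF⟩
end

section
/- Let A be an integral domain which is not a field, K its field of fractions, R = A ∝ K the trivial ring extension of A by K, S₀ a multiplicatively closed subset of A, and S = S₀ ∝ K = {(s, e) : s ∈ S₀, e ∈ K}. Then R is an S-Bézout ring if and only if A is an S₀-Bézout ring. -/
namespace Ideal

variable {R A : Type*} [CommRing R] [CommRing A] {f : R →+* A}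

theorem IsSPrincipal.map_of_surjective (hf : Function.Surjective f) {S : Set R} {S' : Set A}
    (hS : Set.MapsTo f S S') {J : Ideal R} (hJ : J.IsSPrincipal S) :
    (J.map f).IsSPrincipal S' := by
  obtain ⟨s, hs, a, hsJ, haJ⟩ := hJ
  refine ⟨f s, hS hs, f a, fun y hy => ?_, ?_⟩
  · obtain ⟨x, hx, rfl⟩ := (mem_map_iff_of_surjective f hf).mp hy
    simpa [map_span] using mem_map_of_mem f (hsJ x hx)
  · simpa [map_span] using map_mono (f := f) haJ

theorem FG.exists_fg_map_eq_of_surjective (hf : Function.Surjective f) {I : Ideal A}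
    (hI : I.FG) : ∃ J : Ideal R, J.FG ∧ J.map f = I := by
  obtain ⟨T, rfl⟩ := hI
  refine ⟨span (Function.surjInv hf '' T), Submodule.fg_span (T.finite_toSet.image _), ?_⟩
  rw [map_span, ← Set.image_comp, (Function.rightInverse_surjInv hf).comp_eq_id, Set.image_id]

end Ideal

theorem IsSBezout.of_surjective {R A : Type*} [CommRing R] [CommRing A] {f : R →+* A}
    (hf : Function.Surjective f) {S : Set R} {S' : Set A} (hS : Set.MapsTo f S S')
    (h : IsSBezout R S) : IsSBezout A S' := fun I hI => by
  obtain ⟨J, hJ, rfl⟩ := hI.exists_fg_map_eq_of_surjective hf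
  exact (h J hJ).map_of_surjective hf hS

namespace TrivSqZeroExt

variable {A M : Type*} [CommRing A] [AddCommGroup M] [Module A M] [Module Aᵐᵒᵖ M]
  [IsCentralScalar A M]

/-- The ideal `0 ∝ N` of `A ∝ M`. -/
def inrIdeal (N : Submodule A M) : Ideal (TrivSqZeroExt A M) where
  carrier := {x | x.fst = 0 ∧ x.snd ∈ N}
  zero_mem' := ⟨rfl, N.zero_mem⟩
  add_mem' := fun ⟨hx, hx'⟩ ⟨hy, hy'⟩ => ⟨by simp [hx, hy], N.add_mem hx' hy'⟩
  smul_mem' := fun c x ⟨hx, hx'⟩ => ⟨by simp [hx], by simpa [hx] using N.smul_mem c.fst hx'⟩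

theorem mem_inrIdeal {N : Submodule A M} {x : TrivSqZeroExt A M} :
    x ∈ inrIdeal N ↔ x.fst = 0 ∧ x.snd ∈ N := Iff.rfl

theorem isSPrincipal_inrIdeal_smul_span_singleton {S₀ : Set A} {I : Ideal A}
    (hI : I.IsSPrincipal S₀) (u : M) :
    (inrIdeal (I • Submodule.span A {u})).IsSPrincipal {x | x.fst ∈ S₀} := by
  obtain ⟨s, hs, b, hsI, hbI⟩ := hI
  refine ⟨inl s, hs, inr (b • u), fun x ⟨hx, hx'⟩ => ?_, ?_⟩
  · obtain ⟨a, ha, hau⟩ := Submodule.mem_smul_span_singleton.mp hx'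
    obtain ⟨c, hc⟩ := Ideal.mem_span_singleton'.mp (hsI a ha)
    have hx_eq : x = inr (a • u) := ext hx hau.symm
    refine Ideal.mem_span_singleton'.mpr ⟨inl c, ?_⟩
    rw [hx_eq, inl_mul_inr, inl_mul_inr, smul_smul, smul_smul, hc]
  · rw [Ideal.span_singleton_le_iff_mem, mem_inrIdeal]
    exact ⟨fst_inr _ _, Submodule.smul_mem_smul (hbI (Ideal.mem_span_singleton_self b))
      (Submodule.mem_span_singleton_self u)⟩

theorem comap_map_fstHom_of_kerIdeal_le {J : Ideal (TrivSqZeroExt A M)} (hJ : kerIdeal A M ≤ J) :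
    (J.map (fstHom A A M)).comap (fstHom A A M) = J := by
  rw [Ideal.comap_map_of_surjective' _ (fun a => ⟨inl a, rfl⟩), sup_eq_left]
  exact hJ

theorem exists_fg_eq_inrIdeal_of_le_kerIdeal {K : Type*} [CommRing K] [Algebra A K]
    (S : Submonoid A) [IsLocalization S K] [Module Aᵐᵒᵖ K] [IsCentralScalar A K]
    {J : Ideal (TrivSqZeroExt A K)} (hJ : J.FG) (hJker : J ≤ kerIdeal A K) :
    ∃ I : Ideal A, I.FG ∧ ∃ u : K, J = inrIdeal (I • Submodule.span A {u}) := by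
  obtain ⟨T, hTJ⟩ := hJ
  have hTJ' (x : T) : x.1 ∈ J := hTJ ▸ Ideal.subset_span x.2
  have hT (x : T) : x.1 = inr x.1.snd := (mem_kerIdeal_iff_inr A K _).mp (hJker (hTJ' x))
  set g := IsLocalization.integerMultiple S T snd
  set u := IsLocalization.mk' K (1 : A) (IsLocalization.commonDenom S T snd)
  have hgu (x : T) : g x • u = x.1.snd := by
    rw [Algebra.smul_def, IsLocalization.map_integerMultiple, Submonoid.smul_def,
      Algebra.smul_def, mul_right_comm, IsLocalization.mk'_spec', map_one, one_mul]
  refine ⟨Ideal.span (Set.range g), Submodule.fg_span (Set.finite_range g), u, le_antisymm ?_ ?_⟩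
  · rw [← hTJ, Ideal.span_le]
    refine fun x hx => ⟨hJker (hTJ' ⟨x, hx⟩), ?_⟩
    exact Submodule.mem_smul_span_singleton.mpr
      ⟨g ⟨x, hx⟩, Ideal.subset_span ⟨_, rfl⟩, hgu ⟨x, hx⟩⟩
  · rintro x ⟨hx, hx'⟩
    obtain ⟨a, ha, hau⟩ := Submodule.mem_smul_span_singleton.mp hx'
    -- `a ↦ inr (a • u)` is `A`-linear, so it suffices to check the generators of the span
    have hspan : Ideal.span (Set.range g) ≤
        (J.restrictScalars A).comap ((inrHom A K).comp (LinearMap.toSpanSingleton A K u)) := by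
      rw [Ideal.span_le]
      rintro _ ⟨x, rfl⟩
      change inr (g x • u) ∈ J
      rw [hgu, ← hT]
      exact hTJ' x
    rw [show x = inr (a • u) from ext hx hau.symm]
    exact hspan ha

section FaithfulField

variable {K : Type*} [Field K] [Algebra A K] [FaithfulSMul A K] [Module Aᵐᵒᵖ K]
  [IsCentralScalar A K]

theorem inl_dvd_of_dvd_fst {b : A} (hb : b ≠ 0) {x : TrivSqZeroExt A K}
    (h : b ∣ x.fst) : inl b ∣ x := by
  obtain ⟨c, hc⟩ := h
  have hbK : algebraMap A K b ≠ 0 :=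
    (map_ne_zero_iff _ (FaithfulSMul.algebraMap_injective A K)).mpr hb
  refine ⟨inl c + inr ((algebraMap A K b)⁻¹ * x.snd), ext (by simp [hc]) ?_⟩
  simp [Algebra.smul_def, hbK]

theorem kerIdeal_le_of_fst_ne_zero {J : Ideal (TrivSqZeroExt A K)}
    {x : TrivSqZeroExt A K} (hxJ : x ∈ J) (hx : x.fst ≠ 0) : kerIdeal A K ≤ J := by
  have hxK : algebraMap A K x.fst ≠ 0 :=
    (map_ne_zero_iff _ (FaithfulSMul.algebraMap_injective A K)).mpr hx
  intro y hy
  have hy_eq : y = x * inr ((algebraMap A K x.fst)⁻¹ * y.snd) := by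
    rw [(mem_kerIdeal_iff_inr A K y).mp hy]
    ext <;> simp [Algebra.smul_def, hxK]
  rw [hy_eq]
  exact J.mul_mem_right _ hxJ

theorem isSPrincipal_comap_fstHom [IsDomain A] {S₀ : Set A} {I : Ideal A}
    (hI : I ≠ ⊥) (h : I.IsSPrincipal S₀) :
    (I.comap (fstHom A A K)).IsSPrincipal {x | x.fst ∈ S₀} := by
  obtain ⟨s, hs, b, hsI, hbI⟩ := h
  refine ⟨inl s, hs, inl b, fun x hx => ?_, ?_⟩
  · rcases eq_or_ne b 0 with rfl | hb
    · obtain ⟨a, ha, ha0⟩ := Submodule.exists_mem_ne_zero_of_ne_bot hI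
      have hs0 : s = 0 := by simpa [ha0] using hsI a ha
      simp [hs0]
    · exact Ideal.mem_span_singleton.mpr
        (inl_dvd_of_dvd_fst hb (Ideal.mem_span_singleton.mp (hsI _ hx)))
  · rw [Ideal.span_singleton_le_iff_mem]
    exact hbI (Ideal.mem_span_singleton_self b)

end FaithfulField

end TrivSqZeroExt

open TrivSqZeroExt in
theorem IsSBezout.trivSqZeroExt {A K : Type*} [CommRing A] [IsDomain A] [Field K] [Algebra A K]
    [IsFractionRing A K] [Module Aᵐᵒᵖ K] [IsCentralScalar A K] {S₀ : Set A}
    (h : IsSBezout A S₀) : IsSBezout (TrivSqZeroExt A K) {x | x.fst ∈ S₀} := by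
  intro J hJ
  by_cases hker : J ≤ kerIdeal A K
  · obtain ⟨I, hI, u, rfl⟩ := exists_fg_eq_inrIdeal_of_le_kerIdeal (nonZeroDivisors A) hJ hker
    exact isSPrincipal_inrIdeal_smul_span_singleton (h I hI) u
  · obtain ⟨x, hxJ, hx⟩ := Set.not_subset.mp hker
    have hx0 : x.fst ≠ 0 := hx
    have hker' : kerIdeal A K ≤ J := kerIdeal_le_of_fst_ne_zero (K := K) hxJ hx0
    rw [← comap_map_fstHom_of_kerIdeal_le hker']
    refine isSPrincipal_comap_fstHom ?_ (h _ (hJ.map _))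
    exact (Submodule.ne_bot_iff _).mpr ⟨x.fst, Ideal.mem_map_of_mem _ hxJ, hx0⟩

theorem sBezout_trivSqZeroExt_fractionRing_iff_general {A K : Type*} [CommRing A] [IsDomain A]
    [Field K] [Algebra A K] [IsFractionRing A K]
    [Module Aᵐᵒᵖ K] [IsCentralScalar A K] (S₀ : Submonoid A) :
    IsSBezout (TrivSqZeroExt A K) {x : TrivSqZeroExt A K | x.fst ∈ S₀} ↔
      IsSBezout A S₀ :=
  ⟨IsSBezout.of_surjective (f := (TrivSqZeroExt.fstHom A A K).toRingHom)
      (fun a => ⟨TrivSqZeroExt.inl a, rfl⟩) (fun _ hx => hx),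
    IsSBezout.trivSqZeroExt⟩

/-- Let `A` be an integral domain which is not a field, `K` its field of fractions
and `R = A ∝ K` the trivial ring extension. Then `R` is an `(S₀ ∝ K)`-Bézout ring
if and only if `A` is an `S₀`-Bézout ring. -/
theorem sBezout_trivSqZeroExt_fractionRing_iff {A K : Type*} [CommRing A] [IsDomain A]
    (hA : ¬IsField A) [Field K] [Algebra A K] [IsFractionRing A K]
    [Module Aᵐᵒᵖ K] [IsCentralScalar A K] (S₀ : Submonoid A) :
    IsSBezout (TrivSqZeroExt A K) {x : TrivSqZeroExt A K | x.fst ∈ S₀} ↔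
      IsSBezout A S₀ :=
  sBezout_trivSqZeroExt_fractionRing_iff_general S₀
end

section
/- Let (A, M) be a local commutative ring and E an A-module with ME = 0. Let S₀ be a multiplicatively closed subset of A with S₀ ∩ M ≠ ∅ (i.e., S₀ is not contained in the units of A), let R = A ∝ E be the trivial ring extension of A by E, and let S = S₀ ∝ E = {(s, e) : s ∈ S₀, e ∈ E}. Then R is an S-Bézout ring if and only if A is an S₀-Bézout ring. -/
/-- Let `(A, M)` be a local ring, `E` an `A`-module with `ME = 0`, and `S₀` a
multiplicatively closed subset of `A` meeting `M` (i.e. not contained in the units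
of `A`). Then `R = A ∝ E` is an `(S₀ ∝ E)`-Bézout ring if and only if `A` is an
`S₀`-Bézout ring. -/
theorem sBezout_trivSqZeroExt_local_iff {A E : Type*} [CommRing A] [IsLocalRing A]
    [AddCommGroup E] [Module A E] [Module Aᵐᵒᵖ E] [IsCentralScalar A E]
    (hME : ∀ a ∈ IsLocalRing.maximalIdeal A, ∀ e : E, a • e = 0)
    (S₀ : Submonoid A) (hS₀ : ∃ s ∈ S₀, s ∈ IsLocalRing.maximalIdeal A) :
    IsSBezout (TrivSqZeroExt A E) {x : TrivSqZeroExt A E | x.fst ∈ S₀} ↔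
      IsSBezout A S₀ := by
  obtain ⟨s₀, hs₀S, hs₀M⟩ := hS₀
  constructor
  · intro hR I hI
    set f := TrivSqZeroExt.inlHom A E with hf
    obtain ⟨σ, hσ, α, h1, h2⟩ := hR (I.map f) (Ideal.FG.map hI f)
    refine ⟨σ.fst, hσ, α.fst, ?_, ?_⟩
    · intro x hx
      have hx' : σ * TrivSqZeroExt.inl x ∈ Ideal.span {α} :=
        h1 _ (Ideal.mem_map_of_mem f hx)
      rw [Ideal.mem_span_singleton] at hx' ⊢
      obtain ⟨w, hw⟩ := hx'
      exact ⟨w.fst, by simpa using congrArg TrivSqZeroExt.fst hw⟩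
    · rw [Ideal.span_singleton_le_iff_mem]
      have hα : α ∈ I.map f := h2 (Ideal.mem_span_singleton_self α)
      have hm : α.fst ∈ (I.map f).map ((TrivSqZeroExt.fstHom A A E).toRingHom) :=
        Ideal.mem_map_of_mem _ hα
      rwa [Ideal.map_map, show ((TrivSqZeroExt.fstHom A A E).toRingHom).comp f = RingHom.id A from
        RingHom.ext fun r => rfl, Ideal.map_id] at hm
  · intro hA J hJ
    have hsur : Function.Surjective ((TrivSqZeroExt.fstHom A A E).toRingHom) :=
      fun a => ⟨TrivSqZeroExt.inl a, rfl⟩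
    obtain ⟨s, hs, a, h1, h2⟩ := hA (J.map ((TrivSqZeroExt.fstHom A A E).toRingHom)) (Ideal.FG.map hJ _)
    obtain ⟨y, hyJ, hy⟩ := (Ideal.mem_map_iff_of_surjective _ hsur).mp
      (h2 (Ideal.mem_span_singleton_self a))
    refine ⟨TrivSqZeroExt.inl (s * s₀), S₀.mul_mem hs hs₀S,
      TrivSqZeroExt.inl s₀ * y, ?_, ?_⟩
    · intro x hxJ
      have hxI : s * x.fst ∈ Ideal.span {a} := h1 x.fst (Ideal.mem_map_of_mem _ hxJ)
      rw [Ideal.mem_span_singleton] at hxI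
      obtain ⟨c, hc⟩ := hxI
      rw [Ideal.mem_span_singleton]
      refine ⟨TrivSqZeroExt.inl c, ?_⟩
      have hys : s₀ • y.snd = 0 := hME s₀ hs₀M _
      have hxs : s₀ • x.snd = 0 := hME s₀ hs₀M _
      ext
      · have hy' : y.fst = a := hy
        simp only [TrivSqZeroExt.fst_mul, TrivSqZeroExt.fst_inl, hy']
        rw [mul_comm s s₀, mul_assoc, hc, mul_assoc]
      · simp [TrivSqZeroExt.snd_mul, mul_smul, hys, hxs, smul_comm s s₀]
    · rw [Ideal.span_singleton_le_iff_mem]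
      exact Ideal.mul_mem_left J _ hyJ
end

section
/- Let A and B be commutative rings, J an ideal of B, f : A → B a ring homomorphism, S₀ a multiplicatively closed subset of A, and let A ⋈ᶠ J = {(a, f(a)+j) : a ∈ A, j ∈ J} be the amalgamation, a subring of А × B. Let S' = {(s, f(s)) : s ∈ S₀}, a multiplicatively closed subset of A ⋈ᶠ J. If A ⋈ᶠ J is an S'-Bézout ring, then A is an S₀-Bézout ring. -/
/-- The amalgamation `A ⋈ᶠ J = {(a, f(a) + j) : a ∈ A, j ∈ J}` of `A` with `B`
along the ideal `J` of `B` with respect to the ring homomorphism `f : A → B`,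
as a subring of `A × B`. -/
def Amalgamation {A B : Type*} [CommRing A] [CommRing B] (f : A →+* B) (J : Ideal B) :
    Subring (A × B) where
  carrier := {x | x.2 - f x.1 ∈ J}
  one_mem' := by simp
  zero_mem' := by simp
  add_mem' := fun {x y} hx hy => by
    show (x + y).2 - f (x + y).1 ∈ J
    have h : (x + y).2 - f (x + y).1 = (x.2 - f x.1) + (y.2 - f y.1) := by
      simp only [Prod.fst_add, Prod.snd_add, map_add]; ring
    rw [h]; exact J.add_mem hx hy
  neg_mem' := fun {x} hx => by
    show (-x).2 - f (-x).1 ∈ J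
    have h : (-x).2 - f (-x).1 = -(x.2 - f x.1) := by
      simp only [Prod.fst_neg, Prod.snd_neg, map_neg]; ring
    rw [h]; exact J.neg_mem hx
  mul_mem' := fun {x y} hx hy => by
    show (x * y).2 - f (x * y).1 ∈ J
    have h : (x * y).2 - f (x * y).1 = x.2 * (y.2 - f y.1) + f y.1 * (x.2 - f x.1) := by
      simp only [Prod.fst_mul, Prod.snd_mul, map_mul]; ring
    rw [h]; exact J.add_mem (J.mul_mem_left _ hy) (J.mul_mem_left _ hx)

/-- If the amalgamation `A ⋈ᶠ J` is an `S'`-Bézout ring, where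
`S' = {(s, f(s)) : s ∈ S₀}`, then `A` is an `S₀`-Bézout ring. -/
theorem sBezout_of_amalgamation {A B : Type*} [CommRing A] [CommRing B]
    (f : A →+* B) (J : Ideal B) (S₀ : Submonoid A)
    (h : IsSBezout (Amalgamation f J)
      {x : Amalgamation f J | ∃ s ∈ S₀, (x : A × B) = (s, f s)}) :
    IsSBezout A S₀ := by
  intro I hI
  let j : A →+* Amalgamation f J :=
    ((RingHom.id A).prod f).codRestrict (Amalgamation f J) (fun a => by
      show f a - f a ∈ J; simp)
  let φ : Amalgamation f J →+* A := (RingHom.fst A B).comp (Amalgamation f J).subtype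
  have hφj : φ.comp j = RingHom.id A := RingHom.ext (fun a => rfl)
  obtain ⟨s', ⟨s, hs, hseq⟩, g, hg1, hg2⟩ := h (I.map j) (Ideal.FG.map hI j)
  have hφs' : φ s' = s := congrArg Prod.fst hseq
  refine ⟨s, hs, φ g, ?_, ?_⟩
  · intro x hx
    have h1 := hg1 (j x) (Ideal.mem_map_of_mem j hx)
    have h2 : φ (s' * j x) ∈ Ideal.map φ (Ideal.span {g}) := Ideal.mem_map_of_mem φ h1
    rw [Ideal.map_span, Set.image_singleton] at h2
    have heq : φ (s' * j x) = s * x := by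
      rw [map_mul, hφs']
      rfl
    rwa [heq] at h2
  · rw [Ideal.span_le, Set.singleton_subset_iff]
    have h3 : φ g ∈ Ideal.map φ (I.map j) :=
      Ideal.mem_map_of_mem φ (hg2 (Ideal.mem_span_singleton_self g))
    rwa [Ideal.map_map, hφj, Ideal.map_id] at h3
end

section
/- Let A be a commutative ring whose nilradical Nil(A) is a divided prime ideal of A, and let S ⊆ A be a multiplicatively closed subset. Set S' = {s + Nil(A) : s ∈ S}, a multiplicatively closed subset of A/Nil(A). Then A is a nonnil S-Bézout ring if and only if the integral domain A/Nil(A) is an S'-Bézout ring. -/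
/-- A ring `A` (whose nilradical is a divided prime ideal) is a nonnil `S`-Bézout
ring if for every pair of finitely generated nonnil ideals `I ⊆ P` of `A` such
that `P` is `S`-principal, the ideal `I` is `S`-principal. -/
def IsNonnilSBezout (A : Type*) [CommRing A] (S : Set A) : Prop :=
  ∀ I P : Ideal A, I.FG → P.FG → ¬I ≤ nilradical A → ¬P ≤ nilradical A →
    I ≤ P → P.IsSPrincipal S → I.IsSPrincipal S

/-- Let `A` be a ring whose nilradical is a divided prime ideal and `S` a
multiplicatively closed subset of `A`. Then `A` is a nonnil `S`-Bézout ring if and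
only if `A/Nil(A)` is an `S'`-Bézout domain, where `S'` is the image of `S` in
`A/Nil(A)`. -/
theorem isNonnilSBezout_iff_quotient_sBezout {A : Type*} [CommRing A]
    (hprime : (nilradical A).IsPrime)
    (hdiv : ∀ x ∉ nilradical A, nilradical A ≤ Ideal.span {x})
    (S : Submonoid A) :
    IsNonnilSBezout A S ↔
      IsSBezout (A ⧸ nilradical A)
        (Ideal.Quotient.mk (nilradical A) '' (S : Set A)) := by
  haveI := hprime
  classical
  set N := nilradical A with hN
  set π := Ideal.Quotient.mk N with hπ
  have hsurj : Function.Surjective π := Ideal.Quotient.mk_surjective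
  constructor
  · -- forward
    intro h J hJfg
    by_cases hJ : J = ⊥
    · refine ⟨π 1, ⟨1, S.one_mem, rfl⟩, 0, ?_, ?_⟩
      · intro x hx
        rw [hJ] at hx
        simp [Ideal.mem_bot.mp hx]
      · simp [hJ]
    · -- lift J to a f.g. ideal of A
      obtain ⟨T, hT⟩ := hJfg
      set f := Function.surjInv hsurj with hf
      have hfsec : ∀ z : A ⧸ N, π (f z) = z := Function.surjInv_eq hsurj
      set I : Ideal A := Ideal.span (↑(T.image f)) with hI
      have hmap : Ideal.map π I = J := by
        rw [hI, Ideal.map_span, ← hT]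
        congr 1
        ext z
        simp only [Finset.coe_image, Set.mem_image, Finset.mem_coe]
        constructor
        · rintro ⟨y, ⟨t, ht, rfl⟩, rfl⟩
          rw [hfsec]; exact ht
        · rintro hz
          exact ⟨f z, ⟨z, hz, rfl⟩, hfsec z⟩
      have hInil : ¬ I ≤ N := by
        intro hle
        apply hJ
        rw [← hmap]
        refine le_antisymm ?_ bot_le
        rw [Ideal.map_le_iff_le_comap]
        intro x hx
        have : π x = 0 := Ideal.Quotient.eq_zero_iff_mem.mpr (hle hx)
        simp [Ideal.mem_comap, this]
      have hTopNil : ¬ (⊤ : Ideal A) ≤ N := by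
        intro hle
        exact hprime.ne_top (top_le_iff.mp hle)
      have hTopSp : (⊤ : Ideal A).IsSPrincipal S := by
        refine ⟨1, S.one_mem, 1, ?_, le_top⟩
        intro x _
        rw [Ideal.mem_span_singleton]
        exact ⟨x, by ring⟩
      obtain ⟨s, hs, a, h1, h2⟩ :=
        h I ⊤ ⟨T.image f, rfl⟩ ⟨{1}, by simp⟩ hInil hTopNil le_top hTopSp
      refine ⟨π s, ⟨s, hs, rfl⟩, π a, ?_, ?_⟩
      · intro z hz
        rw [← hmap] at hz
        obtain ⟨x, hx, rfl⟩ := (Ideal.mem_map_iff_of_surjective π hsurj).mp hz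
        obtain ⟨c, hc⟩ := Ideal.mem_span_singleton.mp (h1 x hx)
        rw [Ideal.mem_span_singleton]
        exact ⟨π c, by rw [← map_mul, hc, map_mul, mul_comm]⟩
      · rw [Ideal.span_singleton_le_iff_mem, ← hmap]
        exact Ideal.mem_map_of_mem π (h2 (Ideal.mem_span_singleton_self a))
  · -- backward
    intro h I P hIfg _ hInil _ _ _
    by_cases hSN : ∃ s ∈ S, s ∈ N
    · obtain ⟨s, hs, hsn⟩ := hSN
      obtain ⟨n, hn⟩ := mem_nilradical.mp hsn
      have h0 : (0 : A) ∈ S := by rw [← hn]; exact pow_mem hs n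
      exact ⟨0, h0, 0, fun x _ => by rw [zero_mul]; exact Ideal.zero_mem _,
        by rw [Ideal.span_singleton_eq_bot.mpr rfl]; exact bot_le⟩
    · push_neg at hSN
      -- N ≤ I
      obtain ⟨t, ht, htn⟩ := SetLike.not_le_iff_exists.mp hInil
      have hNI : N ≤ I :=
        le_trans (hdiv t htn) ((Ideal.span_singleton_le_iff_mem _).mpr ht)
      obtain ⟨s', ⟨s, hs, rfl⟩, a', h1, h2⟩ := h (Ideal.map π I) (Ideal.FG.map hIfg π)
      obtain ⟨a, rfl⟩ := hsurj a'
      have hsN : s ∉ N := hSN s hs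
      have haN : a ∉ N := by
        intro haN
        have ha0 : π a = 0 := Ideal.Quotient.eq_zero_iff_mem.mpr haN
        -- then J = ⊥, so I ≤ N, contradiction
        apply hInil
        intro x hx
        have := h1 (π x) (Ideal.mem_map_of_mem π hx)
        rw [ha0, Ideal.span_singleton_eq_bot.mpr rfl, Ideal.mem_bot, mul_eq_zero] at this
        rcases this with hs0 | hx0
        · exact absurd (Ideal.Quotient.eq_zero_iff_mem.mp hs0) hsN
        · exact Ideal.Quotient.eq_zero_iff_mem.mp hx0
      have hNa : N ≤ Ideal.span {a} := hdiv a haN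
      refine ⟨s, hs, a, ?_, ?_⟩
      · intro x hx
        have := h1 (π x) (Ideal.mem_map_of_mem π hx)
        obtain ⟨c', hc⟩ := Ideal.mem_span_singleton.mp this
        obtain ⟨c, rfl⟩ := hsurj c'
        have : π (s * x - a * c) = 0 := by
          rw [map_sub, map_mul, map_mul, hc, mul_comm (π a) (π c), sub_self]
        have hmem : s * x - a * c ∈ N := Ideal.Quotient.eq_zero_iff_mem.mp this
        have : s * x = (s * x - a * c) + a * c := by ring
        rw [this]
        exact Ideal.add_mem _ (hNa hmem) (Ideal.mem_span_singleton.mpr ⟨c, rfl⟩)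
      · intro y hy
        obtain ⟨c, rfl⟩ := Ideal.mem_span_singleton'.mp hy
        have : π (c * a) ∈ Ideal.map π I := by
          apply h2
          rw [map_mul, Ideal.mem_span_singleton]
          exact ⟨π c, mul_comm _ _⟩
        obtain ⟨x, hx, hxe⟩ := (Ideal.mem_map_iff_of_surjective π hsurj).mp this
        have : π (c * a - x) = 0 := by rw [map_sub, hxe, sub_self]
        have hmem : c * a - x ∈ N := Ideal.Quotient.eq_zero_iff_mem.mp this
        have he : c * a = (c * a - x) + x := by ring
        rw [he]
        exact Ideal.add_mem _ (hNI hmem) hx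
end
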